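/- arXiv:2111.10042 — 5 statements merged into one kernel-verified Lean document; each statement's English description precedes it below -/
import Mathlib

section
/- If a one-step numerical integrator Φ is F-functionally equivariant for a class F of maps satisfying the affine closure assumptions (F contains identity maps, each F(Y,Z) is a vector space, F is closed under composition with affine maps), then Φ preserves all F-invariants: if F ∈ F(Y,Z) satisfies F'(y)f(y) = 0 for all y, then F(Φ_f(y₀)) = F(y₀). -/
/-- A one-step numerical integrator: assigns to every vector field `f` on a
Banach space `Y` a map `Φ_f : Y → Y` (unit time step). -/
structure Integrator : Type 1 where
  map : ∀ (Y : Type) [NormedAddCommGroup Y] [NormedSpace ℝ Y], (Y → Y) → Y → Y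

/-- A class of maps `𝓕(Y,Z)` for all Banach spaces `Y`, `Z`. -/
def MapClass : Type 1 :=
  ∀ (Y Z : Type) [NormedAddCommGroup Y] [NormedSpace ℝ Y]
    [NormedAddCommGroup Z] [NormedSpace ℝ Z], Set (Y → Z)

/-- Assumption on `𝓕`: contains identities, each `𝓕(Y,Z)` is a vector space of
maps, and `𝓕` is closed under pre- and post-composition with affine maps. -/
def AffineClosed (𝓕 : MapClass) : Prop :=
  (∀ (Y : Type) [NormedAddCommGroup Y] [NormedSpace ℝ Y], (id : Y → Y) ∈ 𝓕 Y Y) ∧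
  (∀ (Y Z : Type) [NormedAddCommGroup Y] [NormedSpace ℝ Y]
     [NormedAddCommGroup Z] [NormedSpace ℝ Z],
     (fun _ : Y => (0 : Z)) ∈ 𝓕 Y Z ∧
     (∀ F G : Y → Z, F ∈ 𝓕 Y Z → G ∈ 𝓕 Y Z → F + G ∈ 𝓕 Y Z) ∧
     (∀ (c : ℝ) (F : Y → Z), F ∈ 𝓕 Y Z → c • F ∈ 𝓕 Y Z)) ∧
  (∀ (Y U V Z : Type) [NormedAddCommGroup Y] [NormedSpace ℝ Y]
     [NormedAddCommGroup U] [NormedSpace ℝ U]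
     [NormedAddCommGroup V] [NormedSpace ℝ V]
     [NormedAddCommGroup Z] [NormedSpace ℝ Z],
     ∀ (A : Y →L[ℝ] U) (a : U) (B : V →L[ℝ] Z) (b : Z) (F : U → V),
       F ∈ 𝓕 U V → (fun y => B (F (A y + a)) + b) ∈ 𝓕 Y Z)

/-- `Φ` preserves `𝓕`-invariants. -/
def PreservesInvariants (Φ : Integrator) (𝓕 : MapClass) : Prop :=
  ∀ (Y Z : Type) [NormedAddCommGroup Y] [NormedSpace ℝ Y]
    [NormedAddCommGroup Z] [NormedSpace ℝ Z],
    ∀ F ∈ 𝓕 Y Z, ∀ f : Y → Y,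
      (∀ y, fderiv ℝ F y (f y) = 0) →
      ∀ y₀, F (Φ.map Y f y₀) = F y₀

/-- `Φ` is `𝓕`-functionally equivariant: applied to the augmented vector field
`g(y,z) = (f(y), F'(y) f(y))`, it maps `(y₀, F(y₀))` to `(y₁, F(y₁))`. -/
def FunctionallyEquivariant (Φ : Integrator) (𝓕 : MapClass) : Prop :=
  ∀ (Y Z : Type) [NormedAddCommGroup Y] [NormedSpace ℝ Y]
    [NormedAddCommGroup Z] [NormedSpace ℝ Z],
    ∀ F ∈ 𝓕 Y Z, ∀ f : Y → Y, ∀ y₀ : Y,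
      Φ.map (Y × Z) (fun p => (f p.1, fderiv ℝ F p.1 (f p.1))) (y₀, F y₀)
        = (Φ.map Y f y₀, F (Φ.map Y f y₀))

/-- `𝓕`-functional equivariance implies preservation of
`𝓕`-invariants. -/
theorem functionallyEquivariant_implies_preservesInvariants
    (Φ : Integrator) (𝓕 : MapClass) (h𝓕 : AffineClosed 𝓕)
    (hfe : FunctionallyEquivariant Φ 𝓕) :
    PreservesInvariants Φ 𝓕 := by
  intro Y Z _ _ _ _ F hF f hinv y₀
  -- constant map G := fun _ => F y₀ lies in 𝓕 Y Z
  obtain ⟨hid, hvs, haff⟩ := h𝓕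
  have hzero : (fun _ : Y => (0 : Z)) ∈ 𝓕 Y Z := (hvs Y Z).1
  have hG : (fun _ : Y => F y₀) ∈ 𝓕 Y Z := by
    have := haff Y Y Z Z (ContinuousLinearMap.id ℝ Y) 0
      (ContinuousLinearMap.id ℝ Z) (F y₀) (fun _ : Y => (0 : Z)) hzero
    simpa using this
  have h1 := hfe Y Z F hF f y₀
  have h2 := hfe Y Z (fun _ : Y => F y₀) hG f y₀
  have hfield : (fun p : Y × Z => (f p.1, fderiv ℝ F p.1 (f p.1)))
      = (fun p : Y × Z => (f p.1, fderiv ℝ (fun _ : Y => F y₀) p.1 (f p.1))) := by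
    funext p
    simp [hinv p.1, fderiv_const]
  rw [hfield] at h1
  have := h1.symm.trans h2
  simpa using congrArg Prod.snd this
end

section
/- Every affine equivariant numerical integrator is affine functionally equivariant: if F : Y → Z is an affine map and f is a vector field on Y, then applying Φ to the augmented vector field g(y,z) = (f(y), F'(y)f(y)) maps (y₀, F(y₀)) to (Φ_f(y₀), F(Φ_f(y₀))). -/
/-- `Φ` is affine equivariant: whenever the affine map `y ↦ A y + c` intertwines
the vector fields `f` and `g` (i.e. `A (f y) = g (A y + c)` for all `y`),
it intertwines `Φ_f` and `Φ_g`. -/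
def AffineEquivariant (Φ : Integrator) : Prop :=
  ∀ (Y U : Type) [NormedAddCommGroup Y] [NormedSpace ℝ Y]
    [NormedAddCommGroup U] [NormedSpace ℝ U],
    ∀ (A : Y →L[ℝ] U) (c : U) (f : Y → Y) (g : U → U),
      (∀ y, A (f y) = g (A y + c)) →
      ∀ y₀, A (Φ.map Y f y₀) + c = Φ.map U g (A y₀ + c)

/-- every affine equivariant integrator is affine functionally
equivariant: for an affine map `F y = L y + c` (with derivative `L`), applying
`Φ` to the augmented vector field `g(y,z) = (f(y), L(f(y)))` maps
`(y₀, F(y₀))` to `(Φ_f(y₀), F(Φ_f(y₀)))`. -/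
theorem affineEquivariant_implies_affineFunctionallyEquivariant
    (Φ : Integrator) (hΦ : AffineEquivariant Φ)
    {Y Z : Type} [NormedAddCommGroup Y] [NormedSpace ℝ Y]
    [NormedAddCommGroup Z] [NormedSpace ℝ Z]
    (L : Y →L[ℝ] Z) (c : Z) (f : Y → Y) (y₀ : Y) :
    Φ.map (Y × Z) (fun p => (f p.1, L (f p.1))) (y₀, L y₀ + c)
      = (Φ.map Y f y₀, L (Φ.map Y f y₀) + c) := by
  have h := hΦ Y (Y × Z) ((ContinuousLinearMap.id ℝ Y).prod L) (0, c)
    f (fun p => (f p.1, L (f p.1))) (fun y => by simp) y₀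
  simp only [ContinuousLinearMap.prod_apply, ContinuousLinearMap.id_apply,
    Prod.mk_add_mk, add_zero] at h
  exact h.symm
end

section
/- Let (Y, ω) be a symplectic vector space (ω antisymmetric, nondegenerate, continuous bilinear) and f a symplectic vector field, i.e., ω(f'(y)ξ, η) + ω(ξ, f'(y)η) = 0 for all y, ξ, η. If Φ is an affine equivariant numerical integrator preserving quadratic invariants, then Φ_f is a symplectic map: ω(Φ_f'(y₀)ξ₀, Φ_f'(y₀)η₀) = ω(ξ₀, η₀) for all y₀, ξ₀, η₀. -/
/-- `Φ` preserves quadratic invariants: for every quadratic functional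
`Q(y) = B(y,y) + L(y) + c` (with `B` continuous bilinear and `L` continuous
linear) that is an invariant of `f`, i.e. `B(f y, y) + B(y, f y) + L(f y) = 0`
for all `y`, the value of `Q` is preserved by `Φ_f`. -/
def PreservesQuadraticInvariants (Φ : Integrator) : Prop :=
  ∀ (Y : Type) [NormedAddCommGroup Y] [NormedSpace ℝ Y],
    ∀ (B : Y →L[ℝ] Y →L[ℝ] ℝ) (L : Y →L[ℝ] ℝ) (c : ℝ) (f : Y → Y),
      (∀ y, B (f y) y + B y (f y) + L (f y) = 0) →
      ∀ y₀, B (Φ.map Y f y₀) (Φ.map Y f y₀) + L (Φ.map Y f y₀) + c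
            = B y₀ y₀ + L y₀ + c

open Filter Topology ZeroAtInfty

theorem HasFDerivAt.tendsto_smul_sub_of_tendsto {E F : Type*} [NormedAddCommGroup E]
    [NormedSpace ℝ E] [NormedAddCommGroup F] [NormedSpace ℝ F] {f : E → F} {f' : E →L[ℝ] F}
    {x : E} (hf : HasFDerivAt f f' x) {α : Type*} {l : Filter α} {c : α → ℝ}
    (hc : Tendsto c l atTop) {v : α → E} {v₀ : E} (hv : Tendsto v l (𝓝 v₀)) :
    Tendsto (fun n => c n • (f (x + (c n)⁻¹ • v n) - f x)) l (𝓝 (f' v₀)) := by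
  refine hf.hasFDerivWithinAt (s := Set.univ).lim ?_ (.of_forall fun _ => trivial) ?_
  · simpa using (tendsto_inv_atTop_zero.comp hc).smul hv
  · refine hv.congr' ((hc.eventually_ne_atTop 0).mono fun n hn => ?_)
    simp only [smul_inv_smul₀ hn]

namespace ZeroAtInftyContinuousMap

variable {β : Type*} [TopologicalSpace β] [Zero β]

theorem tendsto_atTop_zero (a : C₀(ℕ, β)) : Tendsto a atTop (𝓝 0) := by
  simpa [cocompact_eq_atTop] using zero_at_infty a

noncomputable def ofTendsto (u : ℕ → β) (hu : Tendsto u atTop (𝓝 0)) : C₀(ℕ, β) where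
  toFun := u
  continuous_toFun := continuous_of_discreteTopology
  zero_at_infty' := by rwa [cocompact_eq_atTop]

noncomputable def evalCLM {α γ : Type*} [TopologicalSpace α] [NormedAddCommGroup γ]
    [NormedSpace ℝ γ] (x : α) : C₀(α, γ) →L[ℝ] γ :=
  LinearMap.mkContinuous
    { toFun := fun a => a x
      map_add' := fun _ _ => rfl
      map_smul' := fun _ _ => rfl } 1
    fun a => by simpa using BoundedContinuousFunction.norm_coe_le_norm a.toBCF x

end ZeroAtInftyContinuousMap

variable {Y U : Type} [NormedAddCommGroup Y] [NormedSpace ℝ Y] [NormedAddCommGroup U]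
  [NormedSpace ℝ U]

noncomputable def tangentLift (h : Y → Y) (p : Y × Y) : Y × Y :=
  (h p.1, fderiv ℝ h p.1 p.2)

noncomputable def tangentLift₂ (h : Y → Y) (p : Y × Y × Y) : Y × Y × Y :=
  (h p.1, fderiv ℝ h p.1 p.2.1, fderiv ℝ h p.1 p.2.2)

noncomputable def secantDefect {f : Y → Y} (hf : Differentiable ℝ f) (y ξ : Y) (a : C₀(ℕ, Y)) :
    C₀(ℕ, Y) :=
  .ofTendsto (fun n => ((n : ℝ) + 1) • (f (y + ((n : ℝ) + 1)⁻¹ • (ξ + a n)) - f y)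
      - fderiv ℝ f y ξ) <| by
    have hc : Tendsto (fun n : ℕ => (n : ℝ) + 1) atTop atTop :=
      tendsto_atTop_add_const_right _ 1 tendsto_natCast_atTop_atTop
    have hv : Tendsto (fun n => ξ + a n) atTop (𝓝 ξ) := by
      simpa using tendsto_const_nhds.add a.tendsto_atTop_zero
    simpa using ((hf y).hasFDerivAt.tendsto_smul_sub_of_tendsto hc hv).sub_const (fderiv ℝ f y ξ)

namespace AffineEquivariant

variable {Φ : Integrator}

theorem map_apply_of_intertwines (hΦ : AffineEquivariant Φ) (A : Y →L[ℝ] U) (f : Y → Y)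
    (g : U → U) (h : ∀ y, A (f y) = g (A y)) (y₀ : Y) : A (Φ.map Y f y₀) = Φ.map U g (A y₀) := by
  simpa using hΦ Y U A 0 f g (by simpa using h) y₀

theorem map_tangentLift (hΦ : AffineEquivariant Φ) {f : Y → Y} (hf : Differentiable ℝ f)
    {y₀ : Y} (hΦf : DifferentiableAt ℝ (Φ.map Y f) y₀) (ξ₀ : Y) :
    Φ.map (Y × Y) (tangentLift f) (y₀, ξ₀) = tangentLift (Φ.map Y f) (y₀, ξ₀) := by
  let c : ℕ → ℝ := fun n => (n : ℝ) + 1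
  let F : (Y × Y) × C₀(ℕ, Y) → (Y × Y) × C₀(ℕ, Y) :=
    fun q => (tangentLift f q.1, secantDefect hf q.1.1 q.1.2 q.2)
  have hc0 (n : ℕ) : c n ≠ 0 := n.cast_add_one_ne_zero
  set R := Φ.map _ F ((y₀, ξ₀), 0)
  have hR : Φ.map (Y × Y) (tangentLift f) (y₀, ξ₀) = R.1 :=
    (hΦ.map_apply_of_intertwines (.fst ℝ _ _) F (tangentLift f) (fun _ => rfl) ((y₀, ξ₀), 0)).symm
  have hbase : R.1.1 = Φ.map Y f y₀ :=
    hΦ.map_apply_of_intertwines (.fst ℝ Y Y ∘L .fst ℝ _ C₀(ℕ, Y)) F f (fun _ => rfl) ((y₀, ξ₀), 0)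
  have hsecant (n : ℕ) :
      R.1.2 + R.2 n = c n • (Φ.map Y f (y₀ + (c n)⁻¹ • ξ₀) - Φ.map Y f y₀) := by
    let P : (Y × Y) × C₀(ℕ, Y) →L[ℝ] Y := .fst ℝ Y Y ∘L .fst ℝ _ _ + (c n)⁻¹ •
      (.snd ℝ Y Y ∘L .fst ℝ _ _ + ZeroAtInftyContinuousMap.evalCLM n ∘L .snd ℝ _ _)
    have hP (q : (Y × Y) × C₀(ℕ, Y)) : P q = q.1.1 + (c n)⁻¹ • (q.1.2 + q.2 n) := rfl
    have hPF (q : (Y × Y) × C₀(ℕ, Y)) : P (F q) = f (P q) := by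
      rw [hP, hP]
      change f q.1.1 + (c n)⁻¹ • (fderiv ℝ f q.1.1 q.1.2 + (c n • (f (q.1.1 + (c n)⁻¹ •
        (q.1.2 + q.2 n)) - f q.1.1) - fderiv ℝ f q.1.1 q.1.2)) = _
      rw [add_sub_cancel, inv_smul_smul₀ (hc0 n), add_sub_cancel]
    have h := hΦ.map_apply_of_intertwines P F f hPF ((y₀, ξ₀), 0)
    rw [hP, hP, hbase] at h
    simp only [ZeroAtInftyContinuousMap.zero_apply, add_zero] at h
    rw [← h, add_sub_cancel_left, smul_inv_smul₀ (hc0 n)]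
  have hc : Tendsto c atTop atTop :=
    tendsto_atTop_add_const_right _ 1 tendsto_natCast_atTop_atTop
  have hlim : Tendsto (fun n => R.1.2 + R.2 n) atTop (𝓝 R.1.2) := by
    simpa using tendsto_const_nhds.add R.2.tendsto_atTop_zero
  have hderiv : R.1.2 = fderiv ℝ (Φ.map Y f) y₀ ξ₀ :=
    tendsto_nhds_unique (hlim.congr hsecant)
      (hΦf.hasFDerivAt.tendsto_smul_sub_of_tendsto hc tendsto_const_nhds)
  rw [hR, tangentLift, ← hbase, ← hderiv]

theorem map_tangentLift₂ (hΦ : AffineEquivariant Φ) {f : Y → Y} (hf : Differentiable ℝ f)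
    {y₀ : Y} (hΦf : DifferentiableAt ℝ (Φ.map Y f) y₀) (ξ₀ η₀ : Y) :
    Φ.map (Y × Y × Y) (tangentLift₂ f) (y₀, ξ₀, η₀) = tangentLift₂ (Φ.map Y f) (y₀, ξ₀, η₀) := by
  have hξ := hΦ.map_apply_of_intertwines ((ContinuousLinearMap.fst ℝ Y (Y × Y)).prod
    (.fst ℝ Y Y ∘L .snd ℝ _ _)) (tangentLift₂ f) (tangentLift f)
    (fun _ => rfl) (y₀, ξ₀, η₀)
  have hη := hΦ.map_apply_of_intertwines ((ContinuousLinearMap.fst ℝ Y (Y × Y)).prod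
    (.snd ℝ Y Y ∘L .snd ℝ _ _)) (tangentLift₂ f) (tangentLift f)
    (fun _ => rfl) (y₀, ξ₀, η₀)
  simp only [ContinuousLinearMap.prod_apply, ContinuousLinearMap.coe_fst',
    ContinuousLinearMap.coe_comp, Function.comp_apply, ContinuousLinearMap.coe_snd'] at hξ hη
  rw [hΦ.map_tangentLift hf hΦf, Prod.ext_iff] at hξ hη
  exact Prod.ext hξ.1 (Prod.ext hξ.2 hη.2)

end AffineEquivariant

theorem PreservesQuadraticInvariants.map_bilinear_eq {Φ : Integrator}
    (hΦ : PreservesQuadraticInvariants Φ) (B : Y →L[ℝ] Y →L[ℝ] ℝ) {f : Y → Y}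
    (hB : ∀ y, B (f y) y + B y (f y) = 0) (y₀ : Y) :
    B (Φ.map Y f y₀) (Φ.map Y f y₀) = B y₀ y₀ := by
  simpa using hΦ Y B 0 0 f (by simpa using hB) y₀

theorem symplectic_integrator_general
    (Φ : Integrator) (hae : AffineEquivariant Φ)
    (hquad : PreservesQuadraticInvariants Φ)
    {Y : Type} [NormedAddCommGroup Y] [NormedSpace ℝ Y]
    (ω : Y →L[ℝ] Y →L[ℝ] ℝ)
    (f : Y → Y) (hf : Differentiable ℝ f)
    (hsymp : ∀ y ξ η, ω (fderiv ℝ f y ξ) η + ω ξ (fderiv ℝ f y η) = 0)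
    (hΦdiff : Differentiable ℝ (Φ.map Y f)) :
    ∀ y₀ ξ₀ η₀ : Y,
      ω (fderiv ℝ (Φ.map Y f) y₀ ξ₀) (fderiv ℝ (Φ.map Y f) y₀ η₀) = ω ξ₀ η₀ := by
  intro y₀ ξ₀ η₀
  let B : (Y × Y × Y) →L[ℝ] (Y × Y × Y) →L[ℝ] ℝ :=
    ω.bilinearComp (.fst ℝ Y Y ∘L .snd ℝ _ _) (.snd ℝ Y Y ∘L .snd ℝ _ _)
  have hB (q : Y × Y × Y) : B (tangentLift₂ f q) q + B q (tangentLift₂ f q) = 0 :=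
    hsymp q.1 q.2.1 q.2.2
  have h := hquad.map_bilinear_eq B hB (y₀, ξ₀, η₀)
  rwa [hae.map_tangentLift₂ hf (hΦdiff y₀)] at h

/-- if `(Y, ω)` is a symplectic vector space and `f` a symplectic
vector field (`ω(f'(y)ξ, η) + ω(ξ, f'(y)η) = 0`), then any affine equivariant
integrator preserving quadratic invariants is a symplectic integrator:
`ω(Φ_f'(y₀)ξ₀, Φ_f'(y₀)η₀) = ω(ξ₀, η₀)`. -/
theorem symplectic_integrator
    (Φ : Integrator) (hae : AffineEquivariant Φ)
    (hquad : PreservesQuadraticInvariants Φ)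
    {Y : Type} [NormedAddCommGroup Y] [NormedSpace ℝ Y]
    (ω : Y →L[ℝ] Y →L[ℝ] ℝ)
    (hanti : ∀ ξ η, ω ξ η = - ω η ξ)
    (hnondeg : ∀ ξ, (∀ η, ω ξ η = 0) → ξ = 0)
    (f : Y → Y) (hf : Differentiable ℝ f)
    (hsymp : ∀ y ξ η, ω (fderiv ℝ f y ξ) η + ω ξ (fderiv ℝ f y η) = 0)
    (hΦdiff : Differentiable ℝ (Φ.map Y f)) :
    ∀ y₀ ξ₀ η₀ : Y,
      ω (fderiv ℝ (Φ.map Y f) y₀ ξ₀) (fderiv ℝ (Φ.map Y f) y₀ η₀) = ω ξ₀ η₀ :=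
  symplectic_integrator_general Φ hae hquad ω f hf hsymp hΦdiff
end

section
/- Solutions of the de Donder–Weyl equations satisfy the multisymplectic conservation law: if (v, r, τ) and (v', r', τ') are two first variations of a solution (u, p, σ), then ∂_t(vⁱ r'ᵢ − v'ⁱ rᵢ) = −∂_μ(vⁱ τ'ᵢ^μ − v'ⁱ τᵢ^μ), where the Hessian of the Hamiltonian H(t,x,u,p,σ) is symmetric. -/
/-- Index type for the fields `(u, p, σ)` of the de Donder–Weyl equations:
`n` components of `u`, `n` components of `p`, and `n × m` components of `σ`. -/
def WIdx (n m : ℕ) : Type := Fin n ⊕ (Fin n ⊕ Fin n × Fin m)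

instance (n m : ℕ) : Fintype (WIdx n m) := by unfold WIdx; infer_instance

def uIdx {n m : ℕ} (i : Fin n) : WIdx n m := Sum.inl i
def pIdx {n m : ℕ} (i : Fin n) : WIdx n m := Sum.inr (Sum.inl i)
def sIdx {n m : ℕ} (i : Fin n) (μ : Fin m) : WIdx n m := Sum.inr (Sum.inr (i, μ))

/-- `V = (v, r, τ)` is a first variation of a solution of the de Donder–Weyl
equations, where `Hess a b` denotes the Hessian `∂²H/∂w_a∂w_b` of the
Hamiltonian evaluated along the background solution at `(t, x)`:
`v̇ⁱ = H_{pᵢ w_b} V_b`, `∂_μ vⁱ = H_{σᵢ^μ w_b} V_b`,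
`−(ṙᵢ + ∂_μ τᵢ^μ) = H_{uⁱ w_b} V_b` (sum over repeated indices). -/
def IsFirstVariation {n m : ℕ}
    (Hess : ℝ → (Fin m → ℝ) → WIdx n m → WIdx n m → ℝ)
    (V : ℝ → (Fin m → ℝ) → WIdx n m → ℝ) : Prop :=
  (∀ (x : Fin m → ℝ) (a : WIdx n m), Differentiable ℝ (fun s => V s x a)) ∧
  (∀ (t : ℝ) (a : WIdx n m), Differentiable ℝ (fun x => V t x a)) ∧
  (∀ t x (i : Fin n),
    deriv (fun s => V s x (uIdx i)) t
      = ∑ b : WIdx n m, Hess t x (pIdx i) b * V t x b) ∧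
  (∀ t x (i : Fin n) (μ : Fin m),
    fderiv ℝ (fun x => V t x (uIdx i)) x (Pi.single μ 1)
      = ∑ b : WIdx n m, Hess t x (sIdx i μ) b * V t x b) ∧
  (∀ t x (i : Fin n),
    -(deriv (fun s => V s x (pIdx i)) t
        + ∑ μ : Fin m, fderiv ℝ (fun x => V t x (sIdx i μ)) x (Pi.single μ 1))
      = ∑ b : WIdx n m, Hess t x (uIdx i) b * V t x b)

/-! By the product rule, `∂_t(vⁱ r'ᵢ − v'ⁱ rᵢ) + ∂_μ(vⁱ τ'ᵢ^μ − v'ⁱ τᵢ^μ)` only involves first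
derivatives of the variations. Substituting the linearized equations, the divergence terms
`vⁱ ∂_μ τ'ᵢ^μ` cancel against those hidden in `ṙ'ᵢ`, and what remains is `(H V)·V' − (H V')·V`,
which vanishes because the Hessian `H` is symmetric. -/

theorem fderiv_sum_mul_sub_mul_apply {𝕜 E ι : Type*} [NontriviallyNormedField 𝕜]
    [NormedAddCommGroup E] [NormedSpace 𝕜 E] [Fintype ι] {a b a' b' : ι → E → 𝕜} {x : E}
    (ha : ∀ i, DifferentiableAt 𝕜 (a i) x) (hb : ∀ i, DifferentiableAt 𝕜 (b i) x)
    (ha' : ∀ i, DifferentiableAt 𝕜 (a' i) x) (hb' : ∀ i, DifferentiableAt 𝕜 (b' i) x) (y : E) :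
    fderiv 𝕜 (fun z => ∑ i, (a i z * b' i z - a' i z * b i z)) x y
      = ∑ i, (fderiv 𝕜 (a i) x y * b' i x + a i x * fderiv 𝕜 (b' i) x y
          - (fderiv 𝕜 (a' i) x y * b i x + a' i x * fderiv 𝕜 (b i) x y)) := by
  have hsum : HasFDerivAt (fun z => ∑ i, (a i z * b' i z - a' i z * b i z)) _ x :=
    HasFDerivAt.fun_sum fun i _ =>
      ((ha i).hasFDerivAt.mul (hb' i).hasFDerivAt).sub ((ha' i).hasFDerivAt.mul (hb i).hasFDerivAt)
  rw [hsum.fderiv]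
  simp only [sum_apply, sub_apply, add_apply, smul_apply, smul_eq_mul]
  exact Finset.sum_congr rfl fun i _ => by ring

open Matrix

theorem Matrix.IsSymm.mulVec_dotProduct_comm {ι R : Type*} [Fintype ι] [CommSemiring R]
    {A : Matrix ι ι R} (hA : A.IsSymm) (v w : ι → R) : A *ᵥ v ⬝ᵥ w = A *ᵥ w ⬝ᵥ v := by
  rw [dotProduct_comm, dotProduct_mulVec, ← mulVec_transpose, hA.eq]

theorem WIdx.sum_eq {M : Type*} [AddCommMonoid M] {n m : ℕ} (f : WIdx n m → M) :
    ∑ a, f a = ∑ i, f (uIdx i) + ∑ i, f (pIdx i) + ∑ i, ∑ μ, f (sIdx i μ) := by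
  rw [add_assoc, ← Fintype.sum_prod_type']
  exact (Fintype.sum_sum_type (fun a : Fin n ⊕ (Fin n ⊕ Fin n × Fin m) => f a)).trans
    (congrArg _ (Fintype.sum_sum_type _))

/-- The linearized de Donder–Weyl equations at one point `(t, x)`: `W` is the value of the
variation there, `Wt` its `t`-derivative and `Wx μ` its `x_μ`-derivative. -/
structure IsFirstVariationJet {n m : ℕ} (H : Matrix (WIdx n m) (WIdx n m) ℝ)
    (W Wt : WIdx n m → ℝ) (Wx : Fin m → WIdx n m → ℝ) : Prop where
  time_u : ∀ i, Wt (uIdx i) = (H *ᵥ W) (pIdx i)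
  space_u : ∀ i μ, Wx μ (uIdx i) = (H *ᵥ W) (sIdx i μ)
  momentum : ∀ i, -(Wt (pIdx i) + ∑ μ, Wx μ (sIdx i μ)) = (H *ᵥ W) (uIdx i)

namespace IsFirstVariationJet

variable {n m : ℕ} {H : Matrix (WIdx n m) (WIdx n m) ℝ} {W Wt W' Wt' : WIdx n m → ℝ}
  {Wx Wx' : Fin m → WIdx n m → ℝ}

theorem time_p (h : IsFirstVariationJet H W Wt Wx) (i : Fin n) :
    Wt (pIdx i) = -(H *ᵥ W) (uIdx i) - ∑ μ, Wx μ (sIdx i μ) := by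
  linarith [h.momentum i]

theorem conservation_law (hH : H.IsSymm) (h : IsFirstVariationJet H W Wt Wx)
    (h' : IsFirstVariationJet H W' Wt' Wx') :
    ∑ i, (Wt (uIdx i) * W' (pIdx i) + W (uIdx i) * Wt' (pIdx i)
        - (Wt' (uIdx i) * W (pIdx i) + W' (uIdx i) * Wt (pIdx i)))
      = -∑ μ, ∑ i, (Wx μ (uIdx i) * W' (sIdx i μ) + W (uIdx i) * Wx' μ (sIdx i μ)
        - (Wx' μ (uIdx i) * W (sIdx i μ) + W' (uIdx i) * Wx μ (sIdx i μ))) := by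
  have hsymm := hH.mulVec_dotProduct_comm W W'
  simp only [dotProduct, WIdx.sum_eq] at hsymm
  simp only [h.time_u, h'.time_u, h.space_u, h'.space_u, h.time_p, h'.time_p]
  rw [Finset.sum_comm (γ := Fin m)]
  simp only [Finset.sum_add_distrib, Finset.sum_sub_distrib, Finset.mul_sum,
    Finset.sum_neg_distrib, mul_sub, mul_neg]
  simp only [mul_comm (W _) ((H *ᵥ W') _), mul_comm (W' _) ((H *ᵥ W) _)]
  linarith

end IsFirstVariationJet

theorem IsFirstVariation.isFirstVariationJet {n m : ℕ}
    {Hess : ℝ → (Fin m → ℝ) → WIdx n m → WIdx n m → ℝ} {V : ℝ → (Fin m → ℝ) → WIdx n m → ℝ}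
    (hV : IsFirstVariation Hess V) (t : ℝ) (x : Fin m → ℝ) :
    IsFirstVariationJet (Hess t x) (V t x) (fun a => deriv (fun s => V s x a) t)
      (fun μ a => fderiv ℝ (fun y => V t y a) x (Pi.single μ 1)) :=
  ⟨hV.2.2.1 t x, hV.2.2.2.1 t x, hV.2.2.2.2 t x⟩

/-- the multisymplectic conservation law. For any two first
variations `(v, r, τ)` and `(v', r', τ')` of a solution of the de Donder–Weyl
equations (with symmetric Hessian of `H`),
`∂_t (vⁱ r'ᵢ − v'ⁱ rᵢ) = −∂_μ (vⁱ τ'ᵢ^μ − v'ⁱ τᵢ^μ)`. -/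
theorem multisymplectic_conservation_law {n m : ℕ}
    (Hess : ℝ → (Fin m → ℝ) → WIdx n m → WIdx n m → ℝ)
    (hsymm : ∀ t x a b, Hess t x a b = Hess t x b a)
    (V V' : ℝ → (Fin m → ℝ) → WIdx n m → ℝ)
    (hV : IsFirstVariation Hess V) (hV' : IsFirstVariation Hess V') :
    ∀ (t : ℝ) (x : Fin m → ℝ),
      deriv (fun s => ∑ i : Fin n,
          (V s x (uIdx i) * V' s x (pIdx i) - V' s x (uIdx i) * V s x (pIdx i))) t
        = - ∑ μ : Fin m,
            fderiv ℝ (fun x => ∑ i : Fin n,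
                (V t x (uIdx i) * V' t x (sIdx i μ)
                  - V' t x (uIdx i) * V t x (sIdx i μ)))
              x (Pi.single μ 1) := by
  intro t x
  have hVt a := (hV.1 x a).differentiableAt (x := t)
  have hV't a := (hV'.1 x a).differentiableAt (x := t)
  have hVx a := (hV.2.1 t a).differentiableAt (x := x)
  have hV'x a := (hV'.2.1 t a).differentiableAt (x := x)
  rw [← fderiv_apply_one_eq_deriv, fderiv_sum_mul_sub_mul_apply (fun _ => hVt _) (fun _ => hVt _)
    (fun _ => hV't _) (fun _ => hV't _)]
  simp only [fderiv_apply_one_eq_deriv]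
  rw [Finset.sum_congr rfl fun μ _ => fderiv_sum_mul_sub_mul_apply (fun _ => hVx _)
    (fun _ => hVx _) (fun _ => hV'x _) (fun _ => hV'x _) (Pi.single μ 1)]
  exact (hV.isFirstVariationJet t x).conservation_law (.ext fun a b => hsymm t x b a)
    (hV'.isFirstVariationJet t x)
end

section
/- Consider the Korteweg–de Vries semidiscretization u̇ₖ = (α/2h)[θ(u_{k+1}² − u_{k−1}²) + 2(1−θ)uₖ(u_{k+1} − u_{k−1})] + (ν/2h³)(u_{k+2} − 2u_{k+1} + 2u_{k−1} − u_{k−2}). The density ρₖ = uₖ² satisfies a semidiscrete local conservation law ρ̇ₖ = (Jₖ − J_{k+1})/h for some flux J depending on finitely many neighboring values (i.e., d/dt uₖ² is a telescoping difference of a local flux) if and only if θ = 2/3. -/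
/-!
Summing `2 uₖ u̇ₖ` over one period of an `n`-periodic solution, the dispersive terms and the
difference quotients of a local flux cancel, leaving the cubic defect
`(α / h) (2 - 3θ) Σₖ (uₖ² uₖ₊₁ - uₖ uₖ₊₁²)`. A local flux `J` for `uₖ²` would make the whole
sum telescope to zero, so it is enough to exhibit a `3`-periodic solution taking three distinct
values `a, b, c` at some instant, where the cubic sum is `-(a - b)(b - c)(c - a) ≠ 0`; such a
solution is built from `tanh`. Conversely, at `θ = 2/3` the defect vanishes and `kdvFlux` is a
local flux.
-/

open Finset

namespace Real

theorem hasDerivAt_tanh (x : ℝ) : HasDerivAt tanh (1 - tanh x ^ 2) x := by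
  have hquot := (hasDerivAt_sinh x).div (hasDerivAt_cosh x) (cosh_pos x).ne'
  rw [show sinh / cosh = tanh from funext fun y => (tanh_eq_sinh_div_cosh y).symm] at hquot
  refine hquot.congr_deriv ?_
  rw [tanh_eq_sinh_div_cosh]
  field_simp

theorem tanh_pos {x : ℝ} (hx : 0 < x) : 0 < tanh x := by
  rw [tanh_eq_sinh_div_cosh]
  exact div_pos (sinh_pos_iff.mpr hx) (cosh_pos x)

end Real

theorem Fintype.sum_sub_comp_add_eq_zero {G M : Type*} [AddGroup G] [Fintype G]
    [AddCommGroup M] (g : G → M) (a : G) : ∑ x, (g x - g (x + a)) = 0 := by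
  rw [sum_sub_distrib, Fintype.sum_equiv (Equiv.addRight a) (fun x => g (x + a)) g fun _ => rfl,
    sub_self]

section KdV

variable (h α ν θ : ℝ) {R : Type*}

noncomputable def kdvRHS [AddGroupWithOne R] (v : R → ℝ) (k : R) : ℝ :=
  (α / (2 * h)) * (θ * ((v (k+1)) ^ 2 - (v (k-1)) ^ 2)
      + 2 * (1 - θ) * v k * (v (k+1) - v (k-1)))
    + (ν / (2 * h ^ 3)) * (v (k+2) - 2 * v (k+1) + 2 * v (k-1) - v (k-2))

/-- Indexing the grid by `ZMod n` instead of `ℤ` gives the `n`-periodic solutions. -/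
def IsKdVSolution [AddGroupWithOne R] (w : ℝ → R → ℝ) : Prop :=
  ∀ t x, HasDerivAt (fun τ => w τ x) (kdvRHS h α ν θ (w t) x) t

noncomputable def kdvFlux (a b c d : ℝ) : ℝ :=
  -α * (2 * (1 - θ) * b * c ^ 2 + θ * b ^ 2 * c) - ν / h ^ 2 * (a * c + b * d - 2 * b * c)

theorem two_mul_mul_kdvRHS [AddGroupWithOne R] (v : R → ℝ) (k : R) :
    2 * v k * kdvRHS h α ν θ v k =
      (kdvFlux h α ν θ (v (k-2)) (v (k-1)) (v k) (v (k+1))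
        - kdvFlux h α ν θ (v (k-1)) (v k) (v (k+1)) (v (k+2))) / h
      + α / h * (2 - 3 * θ) * (v k ^ 2 * v (k+1) - v k * v (k+1) ^ 2) := by
  unfold kdvRHS kdvFlux
  ring

theorem sum_two_mul_mul_kdvRHS [CommRing R] [Fintype R] (v : R → ℝ) :
    ∑ x, 2 * v x * kdvRHS h α ν θ v x =
      α / h * (2 - 3 * θ) * ∑ x, (v x ^ 2 * v (x+1) - v x * v (x+1) ^ 2) := by
  have hflux := Fintype.sum_sub_comp_add_eq_zero
    (fun x => kdvFlux h α ν θ (v (x-2)) (v (x-1)) (v x) (v (x+1))) 1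
  simp only [show ∀ x : R, x + 1 - 2 = x - 1 by intro x; ring, add_sub_cancel_right,
    add_assoc, one_add_one_eq_two] at hflux
  simp only [two_mul_mul_kdvRHS, sum_add_distrib, ← sum_div, hflux, zero_div, zero_add, mul_sum]

theorem IsKdVSolution.comp_intCast [AddGroupWithOne R] {w : ℝ → R → ℝ}
    (hw : IsKdVSolution h α ν θ w) : IsKdVSolution h α ν θ fun τ (k : ℤ) => w τ k := by
  intro t k
  convert hw t k using 1
  simp only [kdvRHS]
  push_cast
  rfl

theorem IsKdVSolution.hasDerivAt_sq [AddGroupWithOne R] {u : ℝ → R → ℝ}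
    (hu : IsKdVSolution h α ν (2 / 3) u) (t : ℝ) (k : R) :
    HasDerivAt (fun τ => u τ k ^ 2)
      ((kdvFlux h α ν (2 / 3) (u t (k-2)) (u t (k-1)) (u t k) (u t (k+1))
        - kdvFlux h α ν (2 / 3) (u t (k-1)) (u t k) (u t (k+1)) (u t (k+2))) / h) t := by
  refine ((hu t k).pow 2).congr_deriv ?_
  linear_combination two_mul_mul_kdvRHS h α ν (2 / 3) (u t) k

theorem sum_cubic_eq_zero_of_flux {n : ℕ} [NeZero n] {w : ℝ → ZMod n → ℝ}
    (hw : IsKdVSolution h α ν θ w) {r s : ℕ} (J : (Fin (r + s + 1) → ℝ) → ℝ)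
    (hJ : ∀ (t : ℝ) (k : ℤ), HasDerivAt (fun τ => (w τ k) ^ 2)
      ((J (fun j => w t ↑(k - (r : ℤ) + (j : ℕ)))
        - J (fun j => w t ↑(k - (r : ℤ) + 1 + (j : ℕ)))) / h) t) (t : ℝ) :
    α / h * (2 - 3 * θ) * ∑ x, (w t x ^ 2 * w t (x+1) - w t x * w t (x+1) ^ 2) = 0 := by
  set g : ZMod n → ℝ := fun x => J fun j => w t (x - r + (j : ℕ))
  have hrate : ∀ x, 2 * w t x * kdvRHS h α ν θ (w t) x = (g x - g (x + 1)) / h := by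
    intro x
    obtain ⟨k, rfl⟩ := ZMod.intCast_surjective x
    have hunique := ((hw t k).pow 2).unique (hJ t k)
    push_cast at hunique
    simp only [g, add_sub_right_comm _ (1 : ZMod n), ← hunique, pow_one]
  rw [← sum_two_mul_mul_kdvRHS, sum_congr rfl fun x _ => hrate x, ← sum_div,
    Fintype.sum_sub_comp_add_eq_zero, zero_div]

/-- With `p` chosen so that the third value `p / 2 + 1` is stationary, the sum of the other two
stays `p` and their difference `-2T` obeys the Riccati equation `T' = λ (1 - T²)`. -/
theorem exists_isKdVSolution_zmod_three (hh : h ≠ 0) (hα : α ≠ 0) :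
    ∃ w : ℝ → ZMod 3 → ℝ, IsKdVSolution h α ν θ w ∧
      ∑ x, (w 0 x ^ 2 * w 0 (x+1) - w 0 x * w 0 (x+1) ^ 2) ≠ 0 := by
  set lam := α * (3 * θ - 2) / (2 * h)
  set p := 3 * ν / (α * h ^ 2) - 2 * (1 - θ)
  set T : ℝ → ℝ := fun t => Real.tanh (lam * t + 1)
  have hT : ∀ t, HasDerivAt T (lam * (1 - T t ^ 2)) t := by
    intro t
    have := (Real.hasDerivAt_tanh (lam * t + 1)).comp t
      (((hasDerivAt_id t).const_mul lam).add_const 1)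
    exact this.congr_deriv (by ring)
  refine ⟨fun t => ![p / 2 - T t, p / 2 + T t, p / 2 + 1], fun t x => ?_, ?_⟩
  · obtain rfl | rfl | rfl : x = 0 ∨ x = 1 ∨ x = 2 := by decide +revert
    on_goal 1 => refine ((hT t).const_sub (p / 2)).congr_deriv ?_
    on_goal 2 => refine ((hT t).const_add (p / 2)).congr_deriv ?_
    on_goal 3 => refine (hasDerivAt_const t (p / 2 + 1)).congr_deriv ?_
    all_goals
      simp only [kdvRHS]
      reduce_mod_char
      simp [lam, p]
      field_simp
      ring
  · have hpos : 0 < T 0 := Real.tanh_pos (by simp)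
    have hlt : T 0 ^ 2 < 1 := Real.tanh_sq_lt_one _
    have hsum : ∀ f : ZMod 3 → ℝ, ∑ x, f x = f 0 + f 1 + f 2 := fun f => Fin.sum_univ_three f
    rw [hsum]
    reduce_mod_char
    simp only [Matrix.cons_val]
    intro hzero
    have : T 0 * (1 - T 0 ^ 2) = 0 := by linear_combination (-1 / 2) * hzero
    rcases mul_eq_zero.mp this with hT0 | hT0 <;> nlinarith

end KdV

/-- the KdV semidiscretization
`u̇ₖ = (α/2h)[θ(u_{k+1}² − u_{k−1}²) + 2(1−θ)uₖ(u_{k+1} − u_{k−1})]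
      + (ν/2h³)(u_{k+2} − 2u_{k+1} + 2u_{k−1} − u_{k−2})`
admits a semidiscrete local conservation law with density `ρₖ = uₖ²`, i.e.
`d/dt(uₖ²) = (Jₖ − J_{k+1})/h` for some flux `J` depending on finitely many
consecutive grid values, if and only if `θ = 2/3`. -/
theorem kdv_quadratic_conservation_iff
    (h α ν θ : ℝ) (hh : 0 < h) (hα : α ≠ 0) :
    (∃ (r s : ℕ) (J : (Fin (r + s + 1) → ℝ) → ℝ),
      ∀ u : ℝ → ℤ → ℝ,
        (∀ (t : ℝ) (k : ℤ),
          HasDerivAt (fun τ => u τ k)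
            ((α / (2 * h)) * (θ * ((u t (k+1)) ^ 2 - (u t (k-1)) ^ 2)
                + 2 * (1 - θ) * u t k * (u t (k+1) - u t (k-1)))
              + (ν / (2 * h ^ 3))
                  * (u t (k+2) - 2 * u t (k+1) + 2 * u t (k-1) - u t (k-2))) t) →
        ∀ (t : ℝ) (k : ℤ),
          HasDerivAt (fun τ => (u τ k) ^ 2)
            ((J (fun j => u t (k - (r : ℤ) + (j : ℕ)))
              - J (fun j => u t (k - (r : ℤ) + 1 + (j : ℕ)))) / h) t)
    ↔ θ = 2 / 3 := by
  constructor
  · rintro ⟨r, s, J, hJ⟩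
    obtain ⟨w, hw, hcubic⟩ := exists_isKdVSolution_zmod_three h α ν θ hh.ne' hα
    have hbalance := sum_cubic_eq_zero_of_flux h α ν θ hw J (hJ _ hw.comp_intCast) 0
    have hθ := (mul_eq_zero.mp ((mul_eq_zero.mp hbalance).resolve_right hcubic)).resolve_left
      (div_ne_zero hα hh.ne')
    linarith
  · rintro rfl
    refine ⟨2, 1, fun v => kdvFlux h α ν (2 / 3) (v 0) (v 1) (v 2) (v 3), fun u hu t k => ?_⟩
    convert IsKdVSolution.hasDerivAt_sq h α ν hu t k using 4
    all_goals
      dsimp only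
      congr 1
      simp only [Fin.isValue, Fin.coe_ofNat_eq_mod]
      push_cast
      ring
end
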